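/- arXiv:1210.6585 — 3 statements merged into one kernel-verified Lean document; each statement's English description precedes it below -/
import Mathlib

section
/- With notation as above, the map ψ_a defined on generators by ψ_a(e) = p(a, ιe) · e · p(ιe, a) extends to an endomorphism of H', and for any directed path (e₁,…,e_l) from b to b' and any nonzero integer n, ψ_a(e₁ⁿ⋯e_lⁿ) = p(a,b) · e₁ⁿ⁺¹⋯e_lⁿ⁺¹ · p(b',a). -/
/-!
Choose `g v = p(a, v)`. Closed directed paths are relators of `H'`, so `p(·,·)` is well defined,
`p(v, a) = p(a, v)⁻¹` and `g (τe) = g (ιe) · e`. Hence `ψ_a(e) = g(ιe) e g(ιe)⁻¹`, and in the image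
of `e₁ⁿ⋯e_lⁿ` the factors telescope, `g(ιe) eⁿ g(ιe)⁻¹ · g(τe) = g(ιe) eⁿ⁺¹`, leaving
`g(b) · e₁ⁿ⁺¹⋯e_lⁿ⁺¹ · g(b')⁻¹`. On a directed cycle `b = b'` and `e₁ⁿ⁺¹⋯e_lⁿ⁺¹` is again a
relator (or `1`, when `n = -1`), so `ψ_a` kills the relators and descends to `H'`.
-/

open FreeGroup PresentedGroup

variable {V : Type*}

/-- A directed cycle in a simple graph: a nonempty list of darts, consecutive
(cyclically) darts matching head to tail. -/
def IsDirectedCycle (G : SimpleGraph V) (c : List G.Dart) : Prop :=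
  c ≠ [] ∧ ∀ i : Fin c.length,
    (c.get i).toProd.2 = (c.get ⟨(i + 1) % c.length, Nat.mod_lt _ i.pos⟩).toProd.1

/-- The word `e₁ⁿ ⋯ e_lⁿ` in the free group on the darts. -/
def cycleWord {G : SimpleGraph V} (c : List G.Dart) (n : ℤ) : FreeGroup G.Dart :=
  (c.map (fun e => FreeGroup.of e ^ n)).prod

/-- The relators of `H'`. -/
def cycleRels (G : SimpleGraph V) : Set (FreeGroup G.Dart) :=
  {w | ∃ (c : List G.Dart) (n : ℤ), IsDirectedCycle G c ∧ n ≠ 0 ∧ w = cycleWord c n}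

/-- A directed edge path from `a` to `b`. -/
def IsDirectedPath (G : SimpleGraph V) (a b : V) (p : List G.Dart) : Prop :=
  p.Chain' (fun d d' => d.toProd.2 = d'.toProd.1) ∧
  (∀ d ∈ p.head?, d.toProd.1 = a) ∧ (∀ d ∈ p.getLast?, d.toProd.2 = b) ∧
  (p = [] → a = b)

/-- The word of a path in the free group on darts. -/
def pathWord {G : SimpleGraph V} (p : List G.Dart) : FreeGroup G.Dart :=
  (p.map FreeGroup.of).prod

variable {G : SimpleGraph V}

lemma isDirectedPath_nil (b : V) : IsDirectedPath G b b [] :=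
  ⟨List.isChain_nil, by simp, by simp, fun _ => rfl⟩

lemma isDirectedPath_cons_iff {b b' : V} {e : G.Dart} {p : List G.Dart} :
    IsDirectedPath G b b' (e :: p) ↔ e.fst = b ∧ IsDirectedPath G e.snd b' p := by
  change List.IsChain _ _ ∧ _ ↔ _ ∧ List.IsChain _ _ ∧ _
  cases p with
  | nil => simp [eq_comm]
  | cons d p =>
    simp only [List.isChain_cons, List.head?_cons, Option.mem_some_iff, forall_eq',
      List.getLast?_cons_cons, reduceCtorEq, IsEmpty.forall_iff, and_true, eq_comm (a := d.fst)]
    tauto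

lemma IsDirectedPath.append {b c d : V} {p q : List G.Dart}
    (hp : IsDirectedPath G b c p) (hq : IsDirectedPath G c d q) :
    IsDirectedPath G b d (p ++ q) := by
  induction p generalizing b with
  | nil => rwa [hp.2.2.2 rfl]
  | cons e p ih =>
    obtain ⟨rfl, hrest⟩ := isDirectedPath_cons_iff.1 hp
    exact isDirectedPath_cons_iff.2 ⟨rfl, ih hrest⟩

lemma SimpleGraph.Walk.isDirectedPath_darts {u v : V} (w : G.Walk u v) :
    IsDirectedPath G u v w.darts := by
  induction w with
  | nil => exact isDirectedPath_nil _
  | cons h p ih => exact isDirectedPath_cons_iff.2 ⟨rfl, ih⟩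

lemma SimpleGraph.Connected.exists_isDirectedPath (hconn : G.Connected) (u v : V) :
    ∃ p, IsDirectedPath G u v p :=
  ⟨(hconn.preconnected u v).some.darts, Walk.isDirectedPath_darts _⟩

lemma isDirectedCycle_iff_isDirectedPath {c : List G.Dart} (hc : c ≠ []) :
    IsDirectedCycle G c ↔ IsDirectedPath G (c.head hc).fst (c.head hc).fst c := by
  have hlen : 0 < c.length := List.length_pos_iff.2 hc
  simp only [IsDirectedCycle, IsDirectedPath, List.head?_eq_some_head hc,
    List.getLast?_eq_some_getLast hc, Option.mem_some_iff, forall_eq', hc, IsEmpty.forall_iff,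
    and_true, ne_eq, not_false_eq_true, true_and]
  change _ ↔ List.IsChain _ _ ∧ _
  rw [List.isChain_iff_getElem, List.getLast_eq_getElem, List.head_eq_getElem]
  constructor
  · intro h
    refine ⟨fun i hi => ?_, ?_⟩
    · simpa [Nat.mod_eq_of_lt hi] using h ⟨i, by omega⟩
    · simpa [Nat.sub_add_cancel hlen] using h ⟨c.length - 1, by omega⟩
  · rintro ⟨hchain, hlast⟩ ⟨i, hi⟩
    rcases Nat.lt_or_ge (i + 1) c.length with hlt | hge
    · simpa [Nat.mod_eq_of_lt hlt] using hchain i hlt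
    · obtain rfl : i = c.length - 1 := by omega
      simpa [Nat.sub_add_cancel hlen] using hlast

lemma IsDirectedPath.isDirectedCycle {b : V} {c : List G.Dart} (hc : c ≠ [])
    (h : IsDirectedPath G b b c) : IsDirectedCycle G c := by
  obtain rfl : (c.head hc).fst = b := h.2.1 _ (List.head?_eq_some_head hc)
  exact (isDirectedCycle_iff_isDirectedPath hc).2 h

lemma cycleWord_cons (e : G.Dart) (p : List G.Dart) (n : ℤ) :
    cycleWord (e :: p) n = FreeGroup.of e ^ n * cycleWord p n := by
  simp [cycleWord]

lemma pathWord_append (p q : List G.Dart) : pathWord (p ++ q) = pathWord p * pathWord q := by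
  simp [pathWord]

lemma cycleWord_one (p : List G.Dart) : cycleWord p 1 = pathWord p := by
  simp [cycleWord, pathWord]

lemma lift_conj_cycleWord {H : Type*} [Group H] (g : V → H) (f : G.Dart → H)
    (hg : ∀ e : G.Dart, g e.snd = g e.fst * f e) {b b' : V} {p : List G.Dart}
    (hp : IsDirectedPath G b b' p) (n : ℤ) :
    FreeGroup.lift (fun e => g e.fst * f e * (g e.fst)⁻¹) (cycleWord p n) =
      g b * FreeGroup.lift f (cycleWord p (n + 1)) * (g b')⁻¹ := by
  induction p generalizing b with
  | nil =>
    obtain rfl := hp.2.2.2 rfl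
    simp [cycleWord]
  | cons e p ih =>
    obtain ⟨rfl, hrest⟩ := isDirectedPath_cons_iff.1 hp
    rw [cycleWord_cons, _root_.map_mul, _root_.map_zpow, FreeGroup.lift_apply_of, conj_zpow,
      ih hrest, hg e, cycleWord_cons, _root_.map_mul, _root_.map_zpow, FreeGroup.lift_apply_of]
    group

lemma mk_cycleWord_eq_one {c : List G.Dart} (hc : IsDirectedCycle G c) (n : ℤ) :
    PresentedGroup.mk (cycleRels G) (cycleWord c n) = 1 := by
  rcases eq_or_ne n 0 with rfl | hn
  · simp [cycleWord]
  · exact one_of_mem ⟨c, n, hc, hn, rfl⟩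

lemma mk_pathWord_mul_eq_one {b b' : V} {p q : List G.Dart}
    (hp : IsDirectedPath G b b' p) (hq : IsDirectedPath G b' b q) :
    PresentedGroup.mk (cycleRels G) (pathWord p) *
      PresentedGroup.mk (cycleRels G) (pathWord q) = 1 := by
  rw [← _root_.map_mul, ← pathWord_append]
  rcases eq_or_ne (p ++ q) [] with h | h
  · simp [h, pathWord]
  · rw [← cycleWord_one]
    exact mk_cycleWord_eq_one ((hp.append hq).isDirectedCycle h) 1

section PathElement

variable (hconn : G.Connected)

/-- The path element `p(b, b')` of `H'`, represented by an arbitrarily chosen directed path. -/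
noncomputable def pathElem (b b' : V) : PresentedGroup (cycleRels G) :=
  PresentedGroup.mk (cycleRels G) (pathWord (hconn.exists_isDirectedPath b b').choose)

lemma mk_pathWord_eq_pathElem {b b' : V} {p : List G.Dart} (hp : IsDirectedPath G b b' p) :
    PresentedGroup.mk (cycleRels G) (pathWord p) = pathElem hconn b b' := by
  obtain ⟨q, hq⟩ := hconn.exists_isDirectedPath b' b
  exact mul_right_cancel ((mk_pathWord_mul_eq_one hp hq).trans
    (mk_pathWord_mul_eq_one (hconn.exists_isDirectedPath b b').choose_spec hq).symm)

lemma pathElem_inv (b b' : V) : (pathElem hconn b b')⁻¹ = pathElem hconn b' b :=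
  inv_eq_of_mul_eq_one_right (mk_pathWord_mul_eq_one
    (hconn.exists_isDirectedPath b b').choose_spec (hconn.exists_isDirectedPath b' b).choose_spec)

lemma pathElem_mul_of (b : V) (e : G.Dart) :
    pathElem hconn b e.fst * PresentedGroup.of e = pathElem hconn b e.snd := by
  obtain ⟨p, hp⟩ := hconn.exists_isDirectedPath b e.fst
  have hpe : IsDirectedPath G b e.snd (p ++ [e]) :=
    hp.append (isDirectedPath_cons_iff.2 ⟨rfl, isDirectedPath_nil _⟩)
  rw [← mk_pathWord_eq_pathElem hconn hp, ← mk_pathWord_eq_pathElem hconn hpe, pathWord_append,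
    _root_.map_mul]
  simp [pathWord, PresentedGroup.of]

noncomputable def psiGen (a : V) (e : G.Dart) : PresentedGroup (cycleRels G) :=
  pathElem hconn a e.fst * PresentedGroup.of e * pathElem hconn e.fst a

lemma lift_psiGen_cycleWord (a : V) {b b' : V} {p : List G.Dart} (hp : IsDirectedPath G b b' p)
    (n : ℤ) :
    FreeGroup.lift (psiGen hconn a) (cycleWord p n) =
      pathElem hconn a b * PresentedGroup.mk (cycleRels G) (cycleWord p (n + 1)) *
        pathElem hconn b' a := by
  have hmk : FreeGroup.lift PresentedGroup.of = PresentedGroup.mk (cycleRels G) :=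
    FreeGroup.ext_hom _ _ fun _ => FreeGroup.lift_apply_of
  have := lift_conj_cycleWord (pathElem hconn a) PresentedGroup.of
    (fun e => (pathElem_mul_of hconn a e).symm) hp n
  simp only [pathElem_inv, hmk] at this
  exact this

lemma lift_psiGen_eq_one_of_mem (a : V) :
    ∀ r ∈ cycleRels G, FreeGroup.lift (psiGen hconn a) r = 1 := by
  rintro _ ⟨c, n, hc, -, rfl⟩
  have hne : c ≠ [] := hc.1
  rw [lift_psiGen_cycleWord hconn a ((isDirectedCycle_iff_isDirectedPath hne).1 hc) n,
    mk_cycleWord_eq_one hc, mul_one, ← pathElem_inv, inv_mul_cancel]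

noncomputable def psi (a : V) : PresentedGroup (cycleRels G) →* PresentedGroup (cycleRels G) :=
  PresentedGroup.toGroup (lift_psiGen_eq_one_of_mem hconn a)

end PathElement

theorem exists_psi_endomorphism_general {V : Type*} (G : SimpleGraph V)
    (hconn : G.Connected) (a : V) :
    ∃ ψ : PresentedGroup (cycleRels G) →* PresentedGroup (cycleRels G),
      (∀ e : G.Dart, ∀ P Q : List G.Dart,
        IsDirectedPath G a e.toProd.1 P → IsDirectedPath G e.toProd.1 a Q →
        ψ (PresentedGroup.of e) =
          PresentedGroup.mk (cycleRels G) (pathWord P) * PresentedGroup.of e *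
            PresentedGroup.mk (cycleRels G) (pathWord Q)) ∧
      (∀ (b b' : V) (p : List G.Dart), IsDirectedPath G b b' p → ∀ n : ℤ, n ≠ 0 →
        ∀ P Q : List G.Dart, IsDirectedPath G a b P → IsDirectedPath G b' a Q →
        ψ (PresentedGroup.mk (cycleRels G) (cycleWord p n)) =
          PresentedGroup.mk (cycleRels G) (pathWord P) *
            PresentedGroup.mk (cycleRels G) (cycleWord p (n + 1)) *
            PresentedGroup.mk (cycleRels G) (pathWord Q)) := by
  refine ⟨psi hconn a, fun e P Q hP hQ => ?_, fun b b' p hp n _ P Q hP hQ => ?_⟩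
  · rw [mk_pathWord_eq_pathElem hconn hP, mk_pathWord_eq_pathElem hconn hQ]
    exact PresentedGroup.toGroup.of _
  · rw [mk_pathWord_eq_pathElem hconn hP, mk_pathWord_eq_pathElem hconn hQ]
    exact lift_psiGen_cycleWord hconn a hp n

/-- For a fixed basepoint `a` of a connected graph, the assignment
`ψ_a(e) = p(a, ιe) · e · p(ιe, a)` extends to an endomorphism of `H'`, and for any directed
path `(e₁,…,e_l)` from `b` to `b'` and any nonzero integer `n`,
`ψ_a(e₁ⁿ⋯e_lⁿ) = p(a,b) · e₁ⁿ⁺¹⋯e_lⁿ⁺¹ · p(b',a)`. -/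
theorem exists_psi_endomorphism {V : Type*} [Fintype V] (G : SimpleGraph V)
    (hconn : G.Connected) (a : V) :
    ∃ ψ : PresentedGroup (cycleRels G) →* PresentedGroup (cycleRels G),
      (∀ e : G.Dart, ∀ P Q : List G.Dart,
        IsDirectedPath G a e.toProd.1 P → IsDirectedPath G e.toProd.1 a Q →
        ψ (PresentedGroup.of e) =
          PresentedGroup.mk (cycleRels G) (pathWord P) * PresentedGroup.of e *
            PresentedGroup.mk (cycleRels G) (pathWord Q)) ∧
      (∀ (b b' : V) (p : List G.Dart), IsDirectedPath G b b' p → ∀ n : ℤ, n ≠ 0 →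
        ∀ P Q : List G.Dart, IsDirectedPath G a b P → IsDirectedPath G b' a Q →
        ψ (PresentedGroup.mk (cycleRels G) (cycleWord p n)) =
          PresentedGroup.mk (cycleRels G) (pathWord P) *
            PresentedGroup.mk (cycleRels G) (cycleWord p (n + 1)) *
            PresentedGroup.mk (cycleRels G) (pathWord Q)) :=
  exists_psi_endomorphism_general G hconn a
end

section
/- Let Δ be a finite flag complex with nonempty vertex set, G_Δ its right-angled Artin group, and φ: G_Δ → ℤ the homomorphism sending every vertex generator to 1. Then φ is surjective, and its kernel H_Δ is generated by the elements v·w⁻¹ over all pairs of adjacent vertices v, w, provided the 1-skeleton of Δ is connected. -/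
/-!
Adjacent generators commute, so for an edge `{v, w}` both `v w⁻¹` and `v⁻¹ w = w v⁻¹` lie in the
subgroup `K` generated by the edge elements; along edge paths, a connected 1-skeleton puts them in
`K` for all pairs of vertices. These two families make `K` stable under conjugation by each
generator and its inverse, so `K` is normal. Modulo `K` all generators coincide, hence the quotient
map factors through `φ`, which gives `ker φ ≤ K`.
-/

/-- The commutator relators of the right-angled Artin group of a graph. -/
def raagRels {V : Type*} (G : SimpleGraph V) : Set (FreeGroup V) :=
  {w | ∃ v v', G.Adj v v' ∧
    w = FreeGroup.of v * FreeGroup.of v' * (FreeGroup.of v)⁻¹ * (FreeGroup.of v')⁻¹}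

/-- The right-angled Artin group of (the flag complex determined by) a graph. -/
abbrev Raag {V : Type*} (G : SimpleGraph V) := PresentedGroup (raagRels G)

theorem Subgroup.mem_normalizer_closure_of_conj_mem {H : Type*} [Group H] {s : Set H} {g : H}
    (hconj : ∀ x ∈ s, g * x * g⁻¹ ∈ closure s) (hconj_inv : ∀ x ∈ s, g⁻¹ * x * g ∈ closure s) :
    g ∈ normalizer (closure s : Set H) := by
  rw [mem_normalizer_iff_map_conj_eq, MonoidHom.map_closure]
  refine le_antisymm (closure_le _ |>.mpr ?_) ?_
  · rintro _ ⟨x, hx, rfl⟩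
    exact hconj x hx
  · rw [closure_le, ← MonoidHom.map_closure]
    intro x hx
    exact ⟨g⁻¹ * x * g, hconj_inv x hx, by simp [mul_assoc]⟩

theorem SimpleGraph.Reachable.eq_of_forall_adj {V α : Type*} {G : SimpleGraph V} {f : V → α}
    (hf : ∀ ⦃v w⦄, G.Adj v w → f v = f w) {v w : V} (h : G.Reachable v w) : f v = f w := by
  obtain ⟨p⟩ := h
  induction p with
  | nil => rfl
  | cons hadj _ ih => exact (hf hadj).trans ih

namespace Raag

open PresentedGroup (of)

variable {V : Type*} {G : SimpleGraph V}

theorem commute_of_adj {v w : V} (h : G.Adj v w) : Commute (of v : Raag G) (of w) := by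
  have hrel : (PresentedGroup.mk (raagRels G))
      (FreeGroup.of v * FreeGroup.of w * (FreeGroup.of v)⁻¹ * (FreeGroup.of w)⁻¹) = 1 :=
    (QuotientGroup.eq_one_iff _).mpr (Subgroup.subset_normalClosure ⟨v, w, h, rfl⟩)
  simpa [commutatorElement_def] using commutatorElement_eq_one_iff_commute.mp hrel

variable (G) in
def edgeSubgroup : Subgroup (Raag G) :=
  Subgroup.closure {x | ∃ v w : V, G.Adj v w ∧ x = of v * (of w)⁻¹}

/- Both lemmas below say that two elements lie in the same left coset of `edgeSubgroup G`
(`v⁻¹, w⁻¹` and `v, w` respectively), a relation that propagates along edge paths. -/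

theorem of_mul_inv_of_mem_edgeSubgroup {v w : V} (h : G.Reachable v w) :
    (of v : Raag G) * (of w)⁻¹ ∈ edgeSubgroup G := by
  have hcoset := h.eq_of_forall_adj
    (f := fun u ↦ (((of u)⁻¹ : Raag G) : Raag G ⧸ edgeSubgroup G)) fun a b hab ↦ by
      rw [QuotientGroup.eq, inv_inv]
      exact Subgroup.subset_closure ⟨a, b, hab, rfl⟩
  simpa using QuotientGroup.eq.mp hcoset

theorem inv_of_mul_of_mem_edgeSubgroup {v w : V} (h : G.Reachable v w) :
    (of v : Raag G)⁻¹ * of w ∈ edgeSubgroup G := by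
  have hcoset := h.eq_of_forall_adj
    (f := fun u ↦ ((of u : Raag G) : Raag G ⧸ edgeSubgroup G)) fun a b hab ↦ by
      rw [QuotientGroup.eq, (commute_of_adj hab).inv_left.eq]
      exact Subgroup.subset_closure ⟨b, a, hab.symm, rfl⟩
  exact QuotientGroup.eq.mp hcoset

theorem edgeSubgroup_normal (hG : G.Preconnected) : (edgeSubgroup G).Normal := by
  rw [← Subgroup.normalizer_eq_top_iff, eq_top_iff, ← PresentedGroup.closure_range_of,
    Subgroup.closure_le]
  rintro _ ⟨u, rfl⟩
  apply Subgroup.mem_normalizer_closure_of_conj_mem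
  · rintro _ ⟨a, b, hab, rfl⟩
    have hsplit : (of u : Raag G) * (of a * (of b)⁻¹) * (of u)⁻¹ =
        (of u * (of b)⁻¹) * (of a * (of u)⁻¹) := by
      rw [(commute_of_adj hab).inv_right.eq]
      group
    rw [hsplit]
    exact mul_mem (of_mul_inv_of_mem_edgeSubgroup (hG u b))
      (of_mul_inv_of_mem_edgeSubgroup (hG a u))
  · rintro _ ⟨a, b, hab, rfl⟩
    have hsplit : (of u : Raag G)⁻¹ * (of a * (of b)⁻¹) * of u =
        ((of u)⁻¹ * of a) * ((of b)⁻¹ * of u) := by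
      group
    rw [hsplit]
    exact mul_mem (inv_of_mul_of_mem_edgeSubgroup (hG u a))
      (inv_of_mul_of_mem_edgeSubgroup (hG b u))

theorem edgeSubgroup_le_ker {M : Type*} [Group M] {φ : Raag G →* M}
    (hφ : ∀ v w : V, φ (of v) = φ (of w)) : edgeSubgroup G ≤ φ.ker := by
  rw [edgeSubgroup, Subgroup.closure_le]
  rintro _ ⟨v, w, -, rfl⟩
  simp [hφ v w]

theorem ker_le_edgeSubgroup (hG : G.Connected) {φ : Raag G →* Multiplicative ℤ}
    (hφ : ∀ v : V, φ (of v) = Multiplicative.ofAdd 1) : φ.ker ≤ edgeSubgroup G := by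
  have := edgeSubgroup_normal hG.preconnected
  obtain ⟨v₀⟩ := hG.nonempty
  have hmk : QuotientGroup.mk' (edgeSubgroup G) =
      (zpowersHom _ ((of v₀ : Raag G) : Raag G ⧸ edgeSubgroup G)).comp φ := by
    refine PresentedGroup.ext fun v ↦ ?_
    rw [MonoidHom.comp_apply, hφ, zpowersHom_apply, toAdd_ofAdd, zpow_one]
    exact QuotientGroup.eq.mpr (inv_of_mul_of_mem_edgeSubgroup (hG v v₀))
  rw [← QuotientGroup.ker_mk' (edgeSubgroup G), hmk, ← MonoidHom.comap_ker]
  exact Subgroup.comap_mono bot_le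

end Raag

theorem surjective_and_ker_generated_by_edges_general {V : Type*} [Nonempty V]
    (G : SimpleGraph V) (φ : Raag G →* Multiplicative ℤ)
    (hφ : ∀ v : V, φ (PresentedGroup.of v) = Multiplicative.ofAdd 1) :
    Function.Surjective φ ∧
      (G.Connected →
        Subgroup.closure {x : Raag G | ∃ v w : V, G.Adj v w ∧
            x = PresentedGroup.of v * (PresentedGroup.of w)⁻¹} = φ.ker) := by
  obtain ⟨v₀⟩ := ‹Nonempty V›
  refine ⟨fun n ↦ ⟨PresentedGroup.of v₀ ^ n.toAdd, by simp [hφ, ← ofAdd_zsmul]⟩, fun hG ↦ ?_⟩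
  exact le_antisymm (Raag.edgeSubgroup_le_ker fun v w ↦ by rw [hφ, hφ])
    (Raag.ker_le_edgeSubgroup hG hφ)

/-- For a finite flag complex with nonempty vertex set, the homomorphism `φ : G_Δ → ℤ`
sending every vertex generator to `1` is surjective, and if the 1-skeleton is connected its
kernel `H_Δ` is generated by the elements `v·w⁻¹` over adjacent pairs of vertices. -/
theorem surjective_and_ker_generated_by_edges {V : Type*} [Fintype V] [Nonempty V]
    (G : SimpleGraph V) (φ : Raag G →* Multiplicative ℤ)
    (hφ : ∀ v : V, φ (PresentedGroup.of v) = Multiplicative.ofAdd 1) :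
    Function.Surjective φ ∧
      (G.Connected →
        Subgroup.closure {x : Raag G | ∃ v w : V, G.Adj v w ∧
            x = PresentedGroup.of v * (PresentedGroup.of w)⁻¹} = φ.ker) :=
  surjective_and_ker_generated_by_edges_general G φ hφ
end

section
/- Let H' be the group presented by the directed edges of a connected flag complex Δ with cycle relators, and φ: H' → G_Δ the homomorphism with φ(e) = ιe·(τe)⁻¹. Then the image of φ equals the kernel H_Δ of the map G_Δ → ℤ sending every generator to 1. -/
open FreeGroup PresentedGroup

variable {V : Type*}

lemma raag_commute {G : SimpleGraph V} {u w : V} (h : G.Adj u w) :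
    Commute (PresentedGroup.of u : Raag G) (PresentedGroup.of w) := by
  have hr : (FreeGroup.of u * FreeGroup.of w * (FreeGroup.of u)⁻¹ * (FreeGroup.of w)⁻¹ :
      FreeGroup V) ∈ raagRels G := ⟨u, w, h, rfl⟩
  have h1 : (mk (raagRels G)) (FreeGroup.of u * FreeGroup.of w * (FreeGroup.of u)⁻¹ *
      (FreeGroup.of w)⁻¹) = 1 :=
    (QuotientGroup.eq_one_iff _).mpr (Subgroup.subset_normalClosure hr)
  have h2 : (PresentedGroup.of u : Raag G) * PresentedGroup.of w * (PresentedGroup.of u)⁻¹ *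
      (PresentedGroup.of w)⁻¹ = 1 := by
    simpa [PresentedGroup.of, map_mul, map_inv] using h1
  show PresentedGroup.of u * PresentedGroup.of w = PresentedGroup.of w * PresentedGroup.of u
  calc PresentedGroup.of u * PresentedGroup.of w
      = (PresentedGroup.of u * PresentedGroup.of w * (PresentedGroup.of u)⁻¹ *
        (PresentedGroup.of w)⁻¹) * (PresentedGroup.of w * PresentedGroup.of u) := by group
    _ = PresentedGroup.of w * PresentedGroup.of u := by rw [h2]; group

/-- The subgroup generated by the "edge" elements. -/
def edgeSubgroup (G : SimpleGraph V) : Subgroup (Raag G) :=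
  Subgroup.closure (Set.range fun e : G.Dart =>
    (PresentedGroup.of e.toProd.1 : Raag G) * (PresentedGroup.of e.toProd.2)⁻¹)

lemma edge_mem {G : SimpleGraph V} (e : G.Dart) :
    (PresentedGroup.of e.toProd.1 : Raag G) * (PresentedGroup.of e.toProd.2)⁻¹ ∈
      edgeSubgroup G :=
  Subgroup.subset_closure ⟨e, rfl⟩

lemma edge_mem' {G : SimpleGraph V} {u w : V} (h : G.Adj u w) :
    (PresentedGroup.of u : Raag G) * (PresentedGroup.of w)⁻¹ ∈ edgeSubgroup G :=
  edge_mem (⟨(u, w), h⟩ : G.Dart)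

/-- Telescoping along walks. -/
lemma walk_mem {G : SimpleGraph V} {u w : V} (p : G.Walk u w) :
    (PresentedGroup.of u : Raag G) * (PresentedGroup.of w)⁻¹ ∈ edgeSubgroup G ∧
    (PresentedGroup.of u : Raag G)⁻¹ * PresentedGroup.of w ∈ edgeSubgroup G := by
  induction p with
  | nil => refine ⟨?_, ?_⟩ <;> simpa using one_mem _
  | @cons a b c hab p ih =>
    constructor
    · have : (PresentedGroup.of a : Raag G) * (PresentedGroup.of c)⁻¹ =
        (PresentedGroup.of a * (PresentedGroup.of b)⁻¹) *
        (PresentedGroup.of b * (PresentedGroup.of c)⁻¹) := by group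
      rw [this]
      exact mul_mem (edge_mem' hab) ih.1
    · have hc := (raag_commute hab).inv_left.eq
      have : (PresentedGroup.of a : Raag G)⁻¹ * PresentedGroup.of c =
        (PresentedGroup.of b * (PresentedGroup.of a)⁻¹) *
        ((PresentedGroup.of b)⁻¹ * PresentedGroup.of c) := by
        rw [show (PresentedGroup.of b : Raag G) * (PresentedGroup.of a)⁻¹ =
          (PresentedGroup.of a)⁻¹ * PresentedGroup.of b from hc.symm]
        group
      rw [this]
      exact mul_mem (edge_mem' hab.symm) ih.2

lemma pair_mem {G : SimpleGraph V} (hconn : G.Connected) (u w : V) :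
    (PresentedGroup.of u : Raag G) * (PresentedGroup.of w)⁻¹ ∈ edgeSubgroup G ∧
    (PresentedGroup.of u : Raag G)⁻¹ * PresentedGroup.of w ∈ edgeSubgroup G :=
  (hconn u w).elim fun p => walk_mem p

lemma conj_gen {G : SimpleGraph V} (hconn : G.Connected) (v : V) (e : G.Dart) :
    PresentedGroup.of v * (PresentedGroup.of e.toProd.1 * (PresentedGroup.of e.toProd.2)⁻¹) *
      (PresentedGroup.of v)⁻¹ ∈ edgeSubgroup G ∧
    (PresentedGroup.of v)⁻¹ * (PresentedGroup.of e.toProd.1 *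
      (PresentedGroup.of e.toProd.2)⁻¹) * PresentedGroup.of v ∈ edgeSubgroup G := by
  have hc : Commute (PresentedGroup.of e.toProd.1 : Raag G) (PresentedGroup.of e.toProd.2) :=
    raag_commute e.adj
  constructor
  · have : (PresentedGroup.of v : Raag G) *
      (PresentedGroup.of e.toProd.1 * (PresentedGroup.of e.toProd.2)⁻¹) *
      (PresentedGroup.of v)⁻¹ =
      (PresentedGroup.of v * (PresentedGroup.of e.toProd.2)⁻¹) *
      (PresentedGroup.of e.toProd.1 * (PresentedGroup.of v)⁻¹) := by
      rw [show (PresentedGroup.of e.toProd.1 : Raag G) * (PresentedGroup.of e.toProd.2)⁻¹ =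
        (PresentedGroup.of e.toProd.2)⁻¹ * PresentedGroup.of e.toProd.1 from hc.inv_right.eq]
      group
    rw [this]
    exact mul_mem (pair_mem hconn _ _).1 (pair_mem hconn _ _).1
  · have : (PresentedGroup.of v : Raag G)⁻¹ *
      (PresentedGroup.of e.toProd.1 * (PresentedGroup.of e.toProd.2)⁻¹) *
      PresentedGroup.of v =
      ((PresentedGroup.of v)⁻¹ * PresentedGroup.of e.toProd.1) *
      ((PresentedGroup.of e.toProd.2)⁻¹ * PresentedGroup.of v) := by group
    rw [this]
    exact mul_mem (pair_mem hconn _ _).2 (pair_mem hconn e.toProd.2 v).2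

lemma edgeSubgroup_normal {G : SimpleGraph V} (hconn : G.Connected) :
    (edgeSubgroup G).Normal := by
  constructor
  intro k hk g
  let N : Subgroup (Raag G) :=
    { carrier := {g | ∀ k ∈ edgeSubgroup G, g * k * g⁻¹ ∈ edgeSubgroup G ∧
        g⁻¹ * k * g ∈ edgeSubgroup G}
      one_mem' := by intro k hk; constructor <;> simpa using hk
      mul_mem' := by
        intro a b ha hb k hk
        constructor
        · have : a * b * k * (a * b)⁻¹ = a * (b * k * b⁻¹) * a⁻¹ := by group
          rw [this]; exact (ha _ ((hb k hk).1)).1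
        · have : (a * b)⁻¹ * k * (a * b) = b⁻¹ * (a⁻¹ * k * a) * b := by group
          rw [this]; exact (hb _ ((ha k hk).2)).2
      inv_mem' := by
        intro a ha k hk
        simp only [inv_inv]
        constructor
        · exact (ha k hk).2
        · exact (ha k hk).1 }
  have hgen : ∀ v : V, PresentedGroup.of v ∈ N := by
    intro v k hk
    induction hk using Subgroup.closure_induction'' with
    | one => constructor <;> simpa using one_mem _
    | mem x hx =>
      obtain ⟨e, rfl⟩ := hx
      exact conj_gen hconn v e
    | inv_mem x hx =>
      obtain ⟨e, rfl⟩ := hx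
      constructor
      · have : (PresentedGroup.of v : Raag G) *
          (PresentedGroup.of e.toProd.1 * (PresentedGroup.of e.toProd.2)⁻¹)⁻¹ *
          (PresentedGroup.of v)⁻¹ =
          (PresentedGroup.of v * (PresentedGroup.of e.toProd.1 *
            (PresentedGroup.of e.toProd.2)⁻¹) * (PresentedGroup.of v)⁻¹)⁻¹ := by group
        rw [this]; exact inv_mem (conj_gen hconn v e).1
      · have : (PresentedGroup.of v : Raag G)⁻¹ *
          (PresentedGroup.of e.toProd.1 * (PresentedGroup.of e.toProd.2)⁻¹)⁻¹ *
          PresentedGroup.of v =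
          ((PresentedGroup.of v)⁻¹ * (PresentedGroup.of e.toProd.1 *
            (PresentedGroup.of e.toProd.2)⁻¹) * PresentedGroup.of v)⁻¹ := by group
        rw [this]; exact inv_mem (conj_gen hconn v e).2
    | mul x y hx hy ihx ihy =>
      obtain ⟨hx1, hx2⟩ := ihx
      obtain ⟨hy1, hy2⟩ := ihy
      constructor
      · have : (PresentedGroup.of v : Raag G) * (x * y) * (PresentedGroup.of v)⁻¹ =
          (PresentedGroup.of v * x * (PresentedGroup.of v)⁻¹) *
          (PresentedGroup.of v * y * (PresentedGroup.of v)⁻¹) := by group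
        rw [this]; exact mul_mem hx1 hy1
      · have : (PresentedGroup.of v : Raag G)⁻¹ * (x * y) * PresentedGroup.of v =
          ((PresentedGroup.of v)⁻¹ * x * PresentedGroup.of v) *
          ((PresentedGroup.of v)⁻¹ * y * PresentedGroup.of v) := by group
        rw [this]; exact mul_mem hx2 hy2
  exact (generated_by _ N hgen g k hk).1

/-- If `ψ : H' → G_Δ` is the homomorphism with `ψ(e) = ιe·(τe)⁻¹` from the group presented
by the directed edges with cycle relators, then the image of `ψ` equals the kernel of the
map `G_Δ → ℤ` sending every generator to `1`. -/
theorem range_eq_ker {V : Type*} [Fintype V] (G : SimpleGraph V) (hconn : G.Connected)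
    (φ : Raag G →* Multiplicative ℤ)
    (hφ : ∀ v : V, φ (PresentedGroup.of v) = Multiplicative.ofAdd 1)
    (ψ : PresentedGroup (cycleRels G) →* Raag G)
    (hψ : ∀ e : G.Dart, ψ (PresentedGroup.of e) =
      PresentedGroup.of e.toProd.1 * (PresentedGroup.of e.toProd.2)⁻¹) :
    ψ.range = φ.ker := by
  have hrange : ψ.range = edgeSubgroup G := by
    rw [MonoidHom.range_eq_map, ← PresentedGroup.closure_range_of (cycleRels G),
      MonoidHom.map_closure]
    unfold edgeSubgroup
    rw [← Set.range_comp,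
      show (⇑ψ ∘ PresentedGroup.of : G.Dart → Raag G) =
        (fun e : G.Dart => PresentedGroup.of e.toProd.1 * (PresentedGroup.of e.toProd.2)⁻¹)
        from funext hψ]

  rw [hrange]
  have hn := edgeSubgroup_normal (G := G) hconn
  apply le_antisymm
  · -- edgeSubgroup ≤ ker
    refine (Subgroup.closure_le _).mpr ?_
    rintro x ⟨e, rfl⟩
    rw [SetLike.mem_coe, MonoidHom.mem_ker, _root_.map_mul, _root_.map_inv, hφ, hφ,
      mul_inv_cancel]
  · -- ker ≤ edgeSubgroup
    obtain ⟨v₀⟩ := hconn.nonempty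
    set c : Raag G := PresentedGroup.of v₀ with hc
    let S : Subgroup (Raag G) :=
      { carrier := {g | g * c ^ (-(Multiplicative.toAdd (φ g))) ∈ edgeSubgroup G}
        one_mem' := by
          simp only [Set.mem_setOf_eq, _root_.map_one]
          simpa using one_mem (edgeSubgroup G)
        mul_mem' := by
          intro a b ha hb
          simp only [Set.mem_setOf_eq, _root_.map_mul, toAdd_mul] at *
          have key : a * b * c ^ (-(Multiplicative.toAdd (φ a) + Multiplicative.toAdd (φ b))) =
              (a * (b * c ^ (-(Multiplicative.toAdd (φ b)))) * a⁻¹) *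
              (a * c ^ (-(Multiplicative.toAdd (φ a)))) := by
            rw [neg_add, zpow_add]
            group
          rw [key]
          exact mul_mem (hn.conj_mem _ hb a) ha
        inv_mem' := by
          intro a ha
          simp only [Set.mem_setOf_eq, _root_.map_inv, toAdd_inv, neg_neg] at *
          have key : a⁻¹ * c ^ (Multiplicative.toAdd (φ a)) =
              (c ^ (-(Multiplicative.toAdd (φ a))) * (a * c ^ (-(Multiplicative.toAdd (φ a)))) *
              (c ^ (-(Multiplicative.toAdd (φ a))))⁻¹)⁻¹ := by group
          rw [key]
          exact inv_mem (hn.conj_mem _ ha _) }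
    have hSgen : ∀ v : V, PresentedGroup.of v ∈ S := by
      intro v
      show PresentedGroup.of v * c ^ (-(Multiplicative.toAdd (φ (PresentedGroup.of v)))) ∈
        edgeSubgroup G
      rw [hφ v]
      simpa using (pair_mem hconn v v₀).1
    intro g hg
    have hgS : g ∈ S := generated_by _ S hSgen g
    have : g * c ^ (-(Multiplicative.toAdd (φ g))) ∈ edgeSubgroup G := hgS
    rw [MonoidHom.mem_ker.mp hg] at this
    simpa using this
end
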